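/- For all integers r ≥ 2 and n ≥ 2, the probability of the event E_n (that the diagonal cyclic matching is weakly stable) satisfies P(E_n) ≥ ∫_{([0,1]^n)^r} ∏ (1 − x^{(1)}_{i_1} x^{(2)}_{i_2} ⋯ x^{(r)}_{i_r}) dx^{(1)} ⋯ dx^{(r)}, where the product is over all tuples (i_1,…,i_r) ∈ [n]^r with i_1 ≠ i_2, i_2 ≠ i_3, …, i_{r−1} ≠ i_r, i_r ≠ i_1. -/

import Mathlib

/-!
Split each score matrix into its diagonal `d` and its off-diagonal entries `u`, which are
independent. A tuple `t` with cyclically distinct consecutive entries blocks the diagonal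
matching iff `u s (t s) (t (s + 1)) < d s (t s)` for every `s`; these are `r` distinct entries of
`u`, so for fixed `d` the tuple fails to block with probability `1 - ∏ s, d s (t s)`. Each of these
events is increasing in `u`, so by Harris' inequality for the product measure of `u` the
probability (given `d`) that no tuple blocks is at least the product of these probabilities,
which is the integrand. Integrating over `d` gives the bound.
-/

open MeasureTheory Set

noncomputable section

/-- Sample space for the cyclic model: `ω s i j = X^{(s)}_{i,j}`. -/
abbrev CycSpace (r n : ℕ) := Fin r → Fin n → Fin n → ℝ

/-- The distribution of the scores: all `r·n²` entries i.i.d. uniform on `[0,1]`. -/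
def cycMeasure (r n : ℕ) : Measure (CycSpace r n) :=
  Measure.pi fun _ : Fin r => Measure.pi fun _ : Fin n => Measure.pi fun _ : Fin n =>
    volume.restrict (Icc (0:ℝ) 1)

/-- The event `E_n`: there is no tuple `(i_1,…,i_r)` with cyclically consecutive entries
distinct such that `X^{(s)}_{i_s, i_{s+1}} < X^{(s)}_{i_s, i_s}` for every `s`;
i.e. the diagonal cyclic matching is weakly stable. -/
def diagStable (r n : ℕ) (hr : 0 < r) (ω : CycSpace r n) : Prop :=
  haveI : NeZero r := ⟨hr.ne'⟩
  ¬ ∃ i : Fin r → Fin n, (∀ s : Fin r, i s ≠ i (s + 1)) ∧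
      ∀ s : Fin r, ω s (i s) (i (s + 1)) < ω s (i s) (i s)

/-- The integrand `∏ (1 − x^{(1)}_{i_1} ⋯ x^{(r)}_{i_r})`, the product running over all tuples
`(i_1,…,i_r) ∈ [n]^r` with `i_1 ≠ i_2, …, i_{r−1} ≠ i_r, i_r ≠ i_1`. -/
def cycIntegrand (r n : ℕ) (hr : 0 < r) (x : Fin r → Fin n → ℝ) : ℝ :=
  haveI : NeZero r := ⟨hr.ne'⟩
  ∏ i : Fin r → Fin n,
    if ∀ s : Fin r, i s ≠ i (s + 1) then 1 - ∏ s : Fin r, x s (i s) else 1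

open scoped unitInterval

namespace MeasureTheory

variable {X Y : Type*} [MeasurableSpace X] [MeasurableSpace Y]

lemma integrable_of_mem_unitInterval {μ : Measure X} [IsFiniteMeasure μ] {f : X → ℝ}
    (hf : Measurable f) (hf01 : ∀ x, f x ∈ I) : Integrable f μ :=
  .of_bound hf.aestronglyMeasurable 1 <| ae_of_all _ fun x => by
    rw [Real.norm_eq_abs, abs_le]
    constructor <;> linarith [(hf01 x).1, (hf01 x).2]

lemma integral_mem_unitInterval {μ : Measure X} [IsProbabilityMeasure μ] {f : X → ℝ}
    (hf01 : ∀ x, f x ∈ I) : ∫ x, f x ∂μ ∈ I := by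
  refine ⟨integral_nonneg fun x => (hf01 x).1, ?_⟩
  calc ∫ x, f x ∂μ ≤ ∫ _, (1 : ℝ) ∂μ :=
        integral_mono_of_nonneg (ae_of_all _ fun x => (hf01 x).1) (integrable_const 1)
          (ae_of_all _ fun x => (hf01 x).2)
    _ = 1 := by simp

lemma measurable_integral_prodMk_left {ν : Measure Y} [SFinite ν] {f : X × Y → ℝ}
    (hf : Measurable f) : Measurable fun x => ∫ y, f (x, y) ∂ν :=
  hf.stronglyMeasurable.integral_prod_right'.measurable

/-- Harris' (FKG) inequality for `μ`. Restricting to `[0, 1]`-valued functions makes the class of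
test functions closed under products. -/
def HarrisProperty [Preorder X] (μ : Measure X) : Prop :=
  ∀ ⦃f g : X → ℝ⦄, Measurable f → Measurable g → Monotone f → Monotone g →
    (∀ x, f x ∈ I) → (∀ x, g x ∈ I) → (∫ x, f x ∂μ) * (∫ x, g x ∂μ) ≤ ∫ x, f x * g x ∂μ

/-- Chebyshev's integral inequality: on a linear order `(f x - f y) * (g x - g y) ≥ 0`, and the
integral of this over `μ.prod μ` is `2 * (∫ f * g - ∫ f * ∫ g)`. -/
theorem harrisProperty_of_linearOrder [LinearOrder X] (μ : Measure X) [IsProbabilityMeasure μ] :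
    HarrisProperty μ := by
  intro f g hf hg hf_mono hg_mono hf01 hg01
  have hfi : Integrable f μ := integrable_of_mem_unitInterval hf hf01
  have hgi : Integrable g μ := integrable_of_mem_unitInterval hg hg01
  have hfgi : Integrable (fun x => f x * g x) μ :=
    integrable_of_mem_unitInterval (hf.mul hg) fun x => unitInterval.mul_mem (hf01 x) (hg01 x)
  have hnonneg : 0 ≤ ∫ z, (f z.1 - f z.2) * (g z.1 - g z.2) ∂μ.prod μ := by
    refine integral_nonneg fun z => ?_
    rcases le_total z.1 z.2 with h | h
    · exact mul_nonneg_of_nonpos_of_nonpos (sub_nonpos.2 (hf_mono h)) (sub_nonpos.2 (hg_mono h))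
    · exact mul_nonneg (sub_nonneg.2 (hf_mono h)) (sub_nonneg.2 (hg_mono h))
  have hexpand : ∫ z, (f z.1 - f z.2) * (g z.1 - g z.2) ∂μ.prod μ
      = 2 * ∫ x, f x * g x ∂μ - 2 * ((∫ x, f x ∂μ) * ∫ x, g x ∂μ) := by
    have h11 := hfgi.comp_fst μ
    have h22 := hfgi.comp_snd μ
    have h12 := hfi.mul_prod hgi
    have h21 := hgi.mul_prod hfi
    have hring : (fun z : X × X => (f z.1 - f z.2) * (g z.1 - g z.2)) = fun z =>
        (f z.1 * g z.1 + f z.2 * g z.2) - (f z.1 * g z.2 + g z.1 * f z.2) := by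
      ext z
      ring
    rw [hring, integral_sub, integral_add h11 h22, integral_add h12 h21,
      integral_fun_fst (fun x => f x * g x), integral_fun_snd (fun x => f x * g x),
      integral_prod_mul, integral_prod_mul]
    · simp only [probReal_univ, one_smul]
      ring
    exacts [h11.add h22, h12.add h21]
  linarith

theorem MeasurePreserving.harrisProperty [Preorder X] [Preorder Y] {μ : Measure X}
    {ν : Measure Y} {e : X → Y} (he : MeasurePreserving e μ ν) (he_mono : Monotone e)
    (hμ : HarrisProperty μ) : HarrisProperty ν := by
  intro f g hf hg hf_mono hg_mono hf01 hg01
  have hcomp : ∀ F : Y → ℝ, Measurable F → ∫ y, F y ∂ν = ∫ x, F (e x) ∂μ := fun F hF => by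
    rw [← he.map_eq, integral_map he.measurable.aemeasurable hF.aestronglyMeasurable]
  rw [hcomp f hf, hcomp g hg, hcomp (fun y => f y * g y) (hf.mul hg)]
  exact hμ (hf.comp he.measurable) (hg.comp he.measurable) (hf_mono.comp he_mono)
    (hg_mono.comp he_mono) (fun x => hf01 (e x)) (fun x => hg01 (e x))

theorem HarrisProperty.prod [Preorder X] [Preorder Y] {μ : Measure X} {ν : Measure Y}
    [IsProbabilityMeasure μ] [IsProbabilityMeasure ν] (hμ : HarrisProperty μ)
    (hν : HarrisProperty ν) : HarrisProperty (μ.prod ν) := by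
  intro f g hf hg hf_mono hg_mono hf01 hg01
  have hsection_mono : ∀ {h : X × Y → ℝ}, Measurable h → (∀ z, h z ∈ I) → Monotone h →
      Monotone fun x => ∫ y, h (x, y) ∂ν := fun hh h01 h_mono x x' hx =>
    integral_mono (integrable_of_mem_unitInterval (hh.comp measurable_prodMk_left) fun y => h01 _)
      (integrable_of_mem_unitInterval (hh.comp measurable_prodMk_left) fun y => h01 _)
      fun y => h_mono (Prod.mk_le_mk.2 ⟨hx, le_rfl⟩)
  have hfg01 : ∀ z, f z * g z ∈ I := fun z => unitInterval.mul_mem (hf01 z) (hg01 z)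
  have hF01 : ∀ x, ∫ y, f (x, y) ∂ν ∈ I := fun x => integral_mem_unitInterval fun y => hf01 _
  have hG01 : ∀ x, ∫ y, g (x, y) ∂ν ∈ I := fun x => integral_mem_unitInterval fun y => hg01 _
  have hFm := measurable_integral_prodMk_left (ν := ν) hf
  have hGm := measurable_integral_prodMk_left (ν := ν) hg
  rw [integral_prod f (integrable_of_mem_unitInterval hf hf01),
    integral_prod g (integrable_of_mem_unitInterval hg hg01),
    integral_prod (fun z => f z * g z) (integrable_of_mem_unitInterval (hf.mul hg) hfg01)]
  calc (∫ x, ∫ y, f (x, y) ∂ν ∂μ) * ∫ x, ∫ y, g (x, y) ∂ν ∂μ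
      ≤ ∫ x, (∫ y, f (x, y) ∂ν) * ∫ y, g (x, y) ∂ν ∂μ :=
        hμ hFm hGm (hsection_mono hf hf01 hf_mono) (hsection_mono hg hg01 hg_mono) hF01 hG01
    _ ≤ ∫ x, ∫ y, f (x, y) * g (x, y) ∂ν ∂μ := by
        refine integral_mono (integrable_of_mem_unitInterval (hFm.mul hGm)
            fun x => unitInterval.mul_mem (hF01 x) (hG01 x))
          (integrable_of_mem_unitInterval (measurable_integral_prodMk_left (hf.mul hg))
            fun x => integral_mem_unitInterval fun y => hfg01 _) fun x => ?_
        exact hν (hf.comp measurable_prodMk_left) (hg.comp measurable_prodMk_left)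
          (fun y y' hy => hf_mono (Prod.mk_le_mk.2 ⟨le_rfl, hy⟩))
          (fun y y' hy => hg_mono (Prod.mk_le_mk.2 ⟨le_rfl, hy⟩))
          (fun y => hf01 _) (fun y => hg01 _)

theorem HarrisProperty.pi_fin : ∀ (k : ℕ) {X : Fin k → Type*} [∀ i, MeasurableSpace (X i)]
    [∀ i, Preorder (X i)] {μ : ∀ i, Measure (X i)} [∀ i, IsProbabilityMeasure (μ i)],
    (∀ i, HarrisProperty (μ i)) → HarrisProperty (Measure.pi μ)
  | 0, X, _, _, μ, _, _ => by
    intro f g hf hg _ _ _ _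
    rw [Measure.pi_of_empty, integral_dirac' f _ hf.stronglyMeasurable,
      integral_dirac' g _ hg.stronglyMeasurable,
      integral_dirac' (fun x => f x * g x) _ (hf.mul hg).stronglyMeasurable]
  | k + 1, X, _, _, μ, _, hμ => by
    refine (measurePreserving_piFinSuccAbove μ 0).symm.harrisProperty ?_
      ((hμ 0).prod (HarrisProperty.pi_fin k fun j => hμ _))
    rintro ⟨x, p⟩ ⟨y, q⟩ ⟨hxy, hpq⟩
    change Fin.insertNth 0 x p ≤ Fin.insertNth 0 y q
    rw [Fin.insertNth_le_iff]
    simp only [Fin.insertNth_apply_same, Fin.insertNth_apply_succAbove]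
    exact ⟨hxy, hpq⟩

theorem HarrisProperty.pi {ι : Type*} [Fintype ι] {X : ι → Type*} [∀ i, MeasurableSpace (X i)]
    [∀ i, Preorder (X i)] {μ : ∀ i, Measure (X i)} [∀ i, IsProbabilityMeasure (μ i)]
    (hμ : ∀ i, HarrisProperty (μ i)) : HarrisProperty (Measure.pi μ) := by
  let e := (Fintype.equivFin ι).symm
  refine (measurePreserving_piCongrLeft μ e).harrisProperty (fun x y hxy i => ?_)
    (HarrisProperty.pi_fin _ fun i => hμ (e i))
  obtain ⟨a, rfl⟩ := e.surjective i
  simpa only [MeasurableEquiv.piCongrLeft_apply_apply] using hxy a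

theorem HarrisProperty.prod_integral_le_integral_prod [Preorder X] {μ : Measure X}
    [IsProbabilityMeasure μ] (hμ : HarrisProperty μ) {ι : Type*} (s : Finset ι) {f : ι → X → ℝ}
    (hf : ∀ i, Measurable (f i)) (hf_mono : ∀ i, Monotone (f i)) (hf01 : ∀ i x, f i x ∈ I) :
    ∏ i ∈ s, ∫ x, f i x ∂μ ≤ ∫ x, ∏ i ∈ s, f i x ∂μ := by
  classical
  induction s using Finset.induction_on with
  | empty => simp
  | insert i s his ih =>
    simp only [Finset.prod_insert his]
    calc (∫ x, f i x ∂μ) * ∏ j ∈ s, ∫ x, f j x ∂μ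
        ≤ (∫ x, f i x ∂μ) * ∫ x, ∏ j ∈ s, f j x ∂μ :=
          mul_le_mul_of_nonneg_left ih (integral_nonneg fun x => (hf01 i x).1)
      _ ≤ ∫ x, f i x * ∏ j ∈ s, f j x ∂μ :=
          hμ (hf i) (Finset.measurable_prod _ fun j _ => hf j) (hf_mono i)
            (fun x y hxy => Finset.prod_le_prod (fun j _ => (hf01 j x).1)
              fun j _ => hf_mono j hxy)
            (hf01 i) fun x => unitInterval.prod_mem fun j _ => hf01 j x

theorem HarrisProperty.integral_prod_integral_le [Preorder Y] {μ : Measure X} {ν : Measure Y}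
    [IsFiniteMeasure μ] [IsProbabilityMeasure ν] (hν : HarrisProperty ν) {ι : Type*}
    (s : Finset ι) {f : ι → X × Y → ℝ} (hf : ∀ i, Measurable (f i))
    (hf_mono : ∀ i x, Monotone fun y => f i (x, y)) (hf01 : ∀ i z, f i z ∈ I) :
    ∫ x, ∏ i ∈ s, ∫ y, f i (x, y) ∂ν ∂μ ≤ ∫ z, ∏ i ∈ s, f i z ∂μ.prod ν := by
  have hprod : Measurable fun z => ∏ i ∈ s, f i z := Finset.measurable_prod _ fun i _ => hf i
  have hprod01 : ∀ z, ∏ i ∈ s, f i z ∈ I := fun z => unitInterval.prod_mem fun i _ => hf01 i z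
  rw [integral_prod _ (integrable_of_mem_unitInterval hprod hprod01)]
  refine integral_mono (integrable_of_mem_unitInterval ?_ fun x => ?_)
    (integrable_of_mem_unitInterval (measurable_integral_prodMk_left hprod) fun x =>
      integral_mem_unitInterval fun y => hprod01 _) fun x => ?_
  · exact Finset.measurable_prod _ fun i _ => measurable_integral_prodMk_left (hf i)
  · exact unitInterval.prod_mem fun i _ => integral_mem_unitInterval fun y => hf01 i _
  · exact hν.prod_integral_le_integral_prod s (fun i => (hf i).comp measurable_prodMk_left)
      (hf_mono · x) fun i y => hf01 i _

end MeasureTheory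

instance : IsProbabilityMeasure (volume.restrict (Icc (0 : ℝ) 1)) :=
  ⟨by simp⟩

lemma volume_restrict_Icc_Iio {c : ℝ} (hc : c ∈ I) :
    volume.restrict (Icc (0 : ℝ) 1) (Iio c) = ENNReal.ofReal c := by
  have : Iio c ∩ Icc 0 1 = Ico 0 c := by
    ext x
    simp only [mem_inter_iff, mem_Iio, mem_Icc, mem_Ico]
    exact ⟨fun h => ⟨h.2.1, h.1⟩, fun h => ⟨h.2, h.1, by linarith [hc.2]⟩⟩
  rw [Measure.restrict_apply measurableSet_Iio, this, Real.volume_Ico, sub_zero]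

lemma ae_forall_mem_pi_pi {ι κ : Type*} [Fintype ι] [Fintype κ] {μ : Measure ℝ} [SigmaFinite μ]
    {S : Set ℝ} (h : ∀ᵐ x ∂μ, x ∈ S) :
    ∀ᵐ d ∂(Measure.pi fun _ : ι => Measure.pi fun _ : κ => μ), ∀ i k, d i k ∈ S :=
  ae_all_iff.2 fun i => ae_all_iff.2 fun k =>
    (Measure.tendsto_eval_ae_ae (μ := fun _ : ι => Measure.pi fun _ : κ => μ) (i := i)).eventually
      ((Measure.tendsto_eval_ae_ae (μ := fun _ : κ => μ) (i := k)).eventually h)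

/-- Splits each matrix `ω s` into its diagonal and, row by row, its off-diagonal entries,
indexed through `Fin.succAbove`. -/
def splitDiag (r m : ℕ) : CycSpace r (m + 1) ≃ᵐ
    (Fin r → Fin (m + 1) → ℝ) × (Fin r → Fin (m + 1) → Fin m → ℝ) :=
  (MeasurableEquiv.piCongrRight fun _ =>
      (MeasurableEquiv.piCongrRight fun a => MeasurableEquiv.piFinSuccAbove (fun _ => ℝ) a).trans
        (MeasurableEquiv.arrowProdEquivProdArrow _ _ _)).trans
    (MeasurableEquiv.arrowProdEquivProdArrow _ _ _)

section splitDiag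

variable {r m : ℕ} (d : Fin r → Fin (m + 1) → ℝ) (u : Fin r → Fin (m + 1) → Fin m → ℝ)

lemma splitDiag_symm_apply (s : Fin r) (a : Fin (m + 1)) :
    (splitDiag r m).symm (d, u) s a = Fin.insertNth (α := fun _ => ℝ) a (d s a) (u s a) :=
  rfl

@[simp]
lemma splitDiag_symm_apply_self (s : Fin r) (a : Fin (m + 1)) :
    (splitDiag r m).symm (d, u) s a a = d s a := by
  rw [splitDiag_symm_apply, Fin.insertNth_apply_same]

@[simp]
lemma splitDiag_symm_apply_succAbove (s : Fin r) (a : Fin (m + 1)) (j : Fin m) :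
    (splitDiag r m).symm (d, u) s a (a.succAbove j) = u s a j := by
  rw [splitDiag_symm_apply, Fin.insertNth_apply_succAbove]

lemma monotone_splitDiag_symm : Monotone fun u => (splitDiag r m).symm (d, u) :=
  fun u u' hu s a => by
    dsimp only
    rw [splitDiag_symm_apply, splitDiag_symm_apply, Fin.insertNth_le_iff]
    simpa only [Fin.insertNth_apply_same, Fin.insertNth_apply_succAbove] using
      And.intro le_rfl (hu s a)

lemma measurePreserving_splitDiag (μ : Measure ℝ) [SigmaFinite μ] :
    MeasurePreserving (splitDiag r m)
      (Measure.pi fun _ => Measure.pi fun _ => Measure.pi fun _ => μ)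
      ((Measure.pi fun _ => Measure.pi fun _ => μ).prod
        (Measure.pi fun _ => Measure.pi fun _ => Measure.pi fun _ => μ)) := by
  have hrow : MeasurePreserving
      ((MeasurableEquiv.piCongrRight fun a => MeasurableEquiv.piFinSuccAbove (fun _ => ℝ) a).trans
        (MeasurableEquiv.arrowProdEquivProdArrow ℝ (Fin m → ℝ) (Fin (m + 1))))
      (Measure.pi fun _ => Measure.pi fun _ => μ)
      ((Measure.pi fun _ => μ).prod (Measure.pi fun _ => Measure.pi fun _ => μ)) :=
    (measurePreserving_arrowProdEquivProdArrow _ _ _ _ _).comp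
      (measurePreserving_pi _ _ fun a => measurePreserving_piFinSuccAbove (fun _ => μ) a)
  exact (measurePreserving_arrowProdEquivProdArrow _ _ _ _ _).comp
    (measurePreserving_pi _ _ fun _ => hrow)

end splitDiag

section blockedBy

variable {r n : ℕ} [NeZero r]

def blockedBy (t : Fin r → Fin n) : Set (CycSpace r n) :=
  {ω | (∀ s, t s ≠ t (s + 1)) ∧ ∀ s, ω s (t s) (t (s + 1)) < ω s (t s) (t s)}

def unblocked (t : Fin r → Fin n) : CycSpace r n → ℝ :=
  (blockedBy t)ᶜ.indicator 1

lemma measurableSet_blockedBy (t : Fin r → Fin n) : MeasurableSet (blockedBy t) := by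
  rw [blockedBy, ofPred_and, ofPred_forall fun s (ω : CycSpace r n) => ω s _ _ < ω s _ _]
  exact (MeasurableSet.const _).inter <| .iInter fun s =>
    measurableSet_lt (by fun_prop) (by fun_prop)

lemma blockedBy_eq_empty {t : Fin r → Fin n} (ht : ¬∀ s, t s ≠ t (s + 1)) : blockedBy t = ∅ :=
  eq_empty_of_forall_notMem fun _ h => ht h.1

lemma setOf_diagStable_eq_iInter (hr : 0 < r) :
    {ω | diagStable r n hr ω} = ⋂ t, (blockedBy t)ᶜ := by
  ext ω
  simp [diagStable, blockedBy]

lemma measurableSet_setOf_diagStable (hr : 0 < r) :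
    MeasurableSet {ω : CycSpace r n | diagStable r n hr ω} := by
  rw [setOf_diagStable_eq_iInter hr]
  exact .iInter fun t => (measurableSet_blockedBy t).compl

lemma measurable_unblocked (t : Fin r → Fin n) : Measurable (unblocked t) :=
  measurable_one.indicator (measurableSet_blockedBy t).compl

lemma unblocked_mem_unitInterval (t : Fin r → Fin n) (ω : CycSpace r n) : unblocked t ω ∈ I :=
  ⟨indicator_nonneg (fun _ _ => zero_le_one) _,
    indicator_apply_le' (fun _ => le_rfl) fun _ => zero_le_one⟩

lemma prod_unblocked (hr : 0 < r) (ω : CycSpace r n) :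
    ∏ t, unblocked t ω = {ω | diagStable r n hr ω}.indicator 1 ω := by
  simp_rw [unblocked]
  rw [prod_indicator_const_apply, setOf_diagStable_eq_iInter hr]
  simp

variable {m : ℕ}

lemma monotone_unblocked_splitDiag_symm (t : Fin r → Fin (m + 1)) (d : Fin r → Fin (m + 1) → ℝ) :
    Monotone fun u => unblocked t ((splitDiag r m).symm (d, u)) := by
  intro u u' hu
  dsimp only [unblocked]
  by_cases h : (splitDiag r m).symm (d, u) ∈ blockedBy t
  · rw [indicator_of_notMem (s := (blockedBy t)ᶜ) (not_not_intro h)]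
    exact indicator_nonneg (fun _ _ => zero_le_one) _
  · have h' : (splitDiag r m).symm (d, u') ∉ blockedBy t := fun ⟨ht, hlt⟩ => h ⟨ht, fun s =>
      (monotone_splitDiag_symm d hu s (t s) (t (s + 1))).trans_lt (by simpa using hlt s)⟩
    rw [indicator_of_mem h, indicator_of_mem h']
    exact le_rfl

lemma measure_splitDiag_symm_preimage_blockedBy (μ : Measure ℝ) [IsProbabilityMeasure μ]
    (d : Fin r → Fin (m + 1) → ℝ) {t : Fin r → Fin (m + 1)} (ht : ∀ s, t s ≠ t (s + 1)) :
    (Measure.pi fun _ => Measure.pi fun _ => Measure.pi fun _ => μ)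
        ((fun u => (splitDiag r m).symm (d, u)) ⁻¹' blockedBy t) = ∏ s, μ (Iio (d s (t s))) := by
  choose j hj using fun s => Fin.exists_succAbove_eq (ht s).symm
  have : (fun u => (splitDiag r m).symm (d, u)) ⁻¹' blockedBy t =
      univ.pi fun s => (fun v => v (t s) (j s)) ⁻¹' Iio (d s (t s)) := by
    ext u
    simp [blockedBy, ← hj]
  rw [this, Measure.pi_pi]
  refine Finset.prod_congr rfl fun s _ => ?_
  exact ((measurePreserving_eval (fun _ => μ) (j s)).comp
    (measurePreserving_eval (fun _ => Measure.pi fun _ => μ) (t s))).measure_preimage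
    measurableSet_Iio.nullMeasurableSet

lemma integral_unblocked_splitDiag_symm (d : Fin r → Fin (m + 1) → ℝ) (hd : ∀ s a, d s a ∈ I)
    (t : Fin r → Fin (m + 1)) :
    ∫ u, unblocked t ((splitDiag r m).symm (d, u))
        ∂(Measure.pi fun _ => Measure.pi fun _ => Measure.pi fun _ =>
          volume.restrict (Icc (0 : ℝ) 1)) =
      if ∀ s, t s ≠ t (s + 1) then 1 - ∏ s, d s (t s) else 1 := by
  have hg : Measurable fun u => (splitDiag r m).symm (d, u) := by fun_prop
  simp_rw [unblocked, ← indicator_comp_right (fun u => (splitDiag r m).symm (d, u)), Pi.one_comp]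
  rw [integral_indicator_one ((measurableSet_blockedBy t).compl.preimage hg), preimage_compl,
    probReal_compl_eq_one_sub ((measurableSet_blockedBy t).preimage hg)]
  split_ifs with ht
  · rw [measureReal_def, measure_splitDiag_symm_preimage_blockedBy _ d ht, ENNReal.toReal_prod]
    simp_rw [volume_restrict_Icc_Iio (hd _ _), ENNReal.toReal_ofReal (hd _ _).1]
  · simp [blockedBy_eq_empty ht]

lemma cycIntegrand_eq_prod_integral (hr : 0 < r) (d : Fin r → Fin (m + 1) → ℝ)
    (hd : ∀ s a, d s a ∈ I) :
    cycIntegrand r (m + 1) hr d = ∏ t, ∫ u, unblocked t ((splitDiag r m).symm (d, u))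
        ∂(Measure.pi fun _ => Measure.pi fun _ => Measure.pi fun _ =>
          volume.restrict (Icc (0 : ℝ) 1)) :=
  Finset.prod_congr rfl fun t _ => (integral_unblocked_splitDiag_symm d hd t).symm

end blockedBy

/-- For all `r ≥ 2` and `n ≥ 2`,
`P(E_n) ≥ ∫_{([0,1]^n)^r} ∏ (1 − x^{(1)}_{i_1} ⋯ x^{(r)}_{i_r}) dx^{(1)} ⋯ dx^{(r)}`. -/
theorem diag_cyclic_stability_probability_lower_bound (r n : ℕ) (hr : 2 ≤ r) (hn : 2 ≤ n) :
    (∫ x : Fin r → Fin n → ℝ, cycIntegrand r n (by omega) x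
        ∂(Measure.pi fun _ : Fin r => Measure.pi fun _ : Fin n =>
            volume.restrict (Icc (0:ℝ) 1))) ≤
      (cycMeasure r n {ω | diagStable r n (by omega) ω}).toReal := by
  obtain ⟨m, rfl⟩ : ∃ m, n = m + 1 := ⟨n - 1, by omega⟩
  have : NeZero r := ⟨by omega⟩
  have hharris : HarrisProperty (Measure.pi fun _ : Fin r => Measure.pi fun _ : Fin (m + 1) =>
      Measure.pi fun _ : Fin m => volume.restrict (Icc (0 : ℝ) 1)) :=
    .pi fun _ => .pi fun _ => .pi fun _ => harrisProperty_of_linearOrder _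
  calc _ = ∫ d, ∏ t, ∫ u, unblocked t ((splitDiag r m).symm (d, u)) ∂_ ∂_ :=
        integral_congr_ae <| (ae_forall_mem_pi_pi (ae_restrict_mem measurableSet_Icc)).mono
          fun d hd => cycIntegrand_eq_prod_integral _ d hd
    _ ≤ ∫ p, ∏ t, unblocked t ((splitDiag r m).symm p) ∂_ :=
        hharris.integral_prod_integral_le _
          (fun t => (measurable_unblocked t).comp (splitDiag r m).symm.measurable)
          monotone_unblocked_splitDiag_symm fun t _ => unblocked_mem_unitInterval t _
    _ = ∫ ω, ∏ t, unblocked t ω ∂cycMeasure r (m + 1) :=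
        ((measurePreserving_splitDiag _).symm _).integral_comp' fun ω => ∏ t, unblocked t ω
    _ = _ := by
        simp_rw [prod_unblocked (NeZero.pos r)]
        rw [integral_indicator_one (measurableSet_setOf_diagStable _), measureReal_def]
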